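/- Linear check for dilation: suppose the BiSE with weights w : Ω → ℝ and bias b is activated for dilation with structuring element S at almost-binary level δ, i.e. for all δ-almost-binary images I, (I * w > b) equals the dilation of (I > 1/2) by S. Then S is exactly the set of indices whose weight exceeds the threshold τ_⊕ := (b − ∑_{k: w_k < 0} w_k)/(1/2 + δ), that is, S = {i ∈ Ω | w_i > τ_⊕}. -/
import Mathlib


open Finset

/-- `I` is a δ-almost-binary image: values in `[0,1]` avoiding `(1/2−δ, 1/2+δ)`. -/
def AlmostBinary {d : ℕ} (δ : ℝ) (I : (Fin d → ℤ) → ℝ) : Prop :=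
  ∀ j, I j ∈ Set.Icc (0:ℝ) 1 ∧ (I j ≤ 1/2 - δ ∨ 1/2 + δ ≤ I j)

/-- Binary dilation `X ⊕ S = {x + s : x ∈ X, s ∈ S}`. -/
def dilation {d : ℕ} (X S : Set (Fin d → ℤ)) : Set (Fin d → ℤ) :=
  {z | ∃ x ∈ X, ∃ s ∈ S, z = x + s}

/-- Correlation/convolution of an image with weights supported on `Ω`. -/
noncomputable def conv {d : ℕ} (Ω : Finset (Fin d → ℤ)) (w : (Fin d → ℤ) → ℝ)
    (I : (Fin d → ℤ) → ℝ) (j : Fin d → ℤ) : ℝ :=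
  ∑ i ∈ Ω, w i * I (j - i)

/-- Linear check for dilation: if the BiSE `(w, b)` is activated for dilation with
structuring element `S` at almost-binary level `δ`, then `S` is the set of weights
above the threshold `τ_⊕ = (b − ∑_{w_k<0} w_k)/(1/2+δ)`. -/
theorem stmt13 {d : ℕ} (Ω S : Finset (Fin d → ℤ)) (hSΩ : S ⊆ Ω) (hS : S.Nonempty)
    (δ : ℝ) (hδ : 0 < δ) (hδ' : δ ≤ 1/2) (w : (Fin d → ℤ) → ℝ) (b : ℝ)
    (hact : ∀ I : (Fin d → ℤ) → ℝ, AlmostBinary δ I →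
      {j | b < conv Ω w I j} = dilation {j | 1/2 < I j} (S : Set (Fin d → ℤ))) :
    (S : Set (Fin d → ℤ)) =
      {i | i ∈ Ω ∧ (b - ∑ k ∈ Ω.filter (fun k => w k < 0), w k) / (1/2 + δ) < w i} := by
  classical
  set N : ℝ := ∑ k ∈ Ω.filter (fun k => w k < 0), w k with hN
  have hNle : N ≤ 0 := Finset.sum_nonpos (fun k hk => le_of_lt (Finset.mem_filter.mp hk).2)
  have hhalf : (0:ℝ) < 1/2 + δ := by linarith
  -- b ≥ 0, via the zero image
  have hb0 : 0 ≤ b := by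
    by_contra h
    push_neg at h
    have hab : AlmostBinary δ (fun _ : Fin d → ℤ => (0:ℝ)) := by
      intro j
      exact ⟨⟨le_refl 0, by norm_num⟩, Or.inl (by linarith)⟩
    have h0 : (0 : Fin d → ℤ) ∈ {j | b < conv Ω w (fun _ => (0:ℝ)) j} := by
      simp [conv]
      exact h
    rw [hact _ hab] at h0
    obtain ⟨x, hx, _⟩ := h0
    norm_num at hx
  -- (A2): for i ∈ Ω \ S, w i ≤ b
  have hA2 : ∀ i ∈ Ω, i ∉ S → w i ≤ b := by
    intro i hiΩ hiS
    set I : (Fin d → ℤ) → ℝ := fun x => if x = -i then 1 else 0 with hI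
    have hab : AlmostBinary δ I := by
      intro j
      simp only [hI]
      split
      · exact ⟨⟨by norm_num, le_refl 1⟩, Or.inr (by linarith)⟩
      · exact ⟨⟨le_refl 0, by norm_num⟩, Or.inl (by linarith)⟩
    have hconv : conv Ω w I 0 = w i := by
      unfold conv
      have : ∀ k ∈ Ω, w k * I (0 - k) = if k = i then w k else 0 := by
        intro k _
        have hk : (0 - k = -i) ↔ (k = i) := by
          constructor
          · intro h; have := neg_injective (by simpa using h); exact this
          · intro h; simp [h]
        simp only [hI]
        by_cases h : k = i
        · simp [h]
        · simp [h, hk.not.mpr h]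
      rw [Finset.sum_congr rfl this, Finset.sum_ite_eq' Ω i (fun k => w k), if_pos hiΩ]
    by_contra hlt
    push_neg at hlt
    have h0 : (0 : Fin d → ℤ) ∈ {j | b < conv Ω w I j} := by
      rw [Set.mem_setOf_eq, hconv]; exact hlt
    rw [hact I hab] at h0
    obtain ⟨x, hx, s, hs, hz⟩ := h0
    have hx' : x = -i := by
      by_contra h
      simp only [Set.mem_setOf_eq, hI, if_neg h] at hx
      norm_num at hx
    rw [hx'] at hz
    have : i = s := neg_add_eq_zero.mp hz.symm
    exact hiS (this ▸ hs)
  -- (B): for i ∈ S, b < (1/2+δ) * w i + N (and w i ≥ 0)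
  have hB : ∀ i ∈ S, b < (1/2 + δ) * w i + N := by
    intro i hiS
    have hiΩ : i ∈ Ω := hSΩ hiS
    set I : (Fin d → ℤ) → ℝ := fun x =>
      if x = -i then 1/2 + δ else if (-x) ∈ Ω ∧ w (-x) < 0 then 1 else 0 with hI
    have hab : AlmostBinary δ I := by
      intro j
      simp only [hI]
      split
      · exact ⟨⟨by linarith, by linarith⟩, Or.inr (le_refl _)⟩
      · split
        · exact ⟨⟨by norm_num, le_refl 1⟩, Or.inr (by linarith)⟩
        · exact ⟨⟨le_refl 0, by norm_num⟩, Or.inl (by linarith)⟩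
    set M : ℝ := ∑ k ∈ (Ω.erase i).filter (fun k => w k < 0), w k with hM
    have hconv : conv Ω w I 0 = (1/2 + δ) * w i + M := by
      unfold conv
      have hterm : ∀ k ∈ Ω, w k * I (0 - k) =
          if k = i then (1/2 + δ) * w k else (if w k < 0 then w k else 0) := by
        intro k hk
        have h0k : (0:Fin d → ℤ) - k = -k := by simp
        by_cases h : k = i
        · simp [hI, h0k, h, mul_comm]
        · have hne : -k ≠ -i := fun hc => h (neg_injective hc)
          simp only [hI, h0k, if_neg hne, neg_neg, if_neg h]
          by_cases hw : w k < 0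
          · simp [hk, hw]
          · simp [hw]
      rw [Finset.sum_congr rfl hterm]
      rw [← Finset.add_sum_erase Ω _ hiΩ, if_pos rfl]
      congr 1
      rw [hM, Finset.sum_filter]
      refine Finset.sum_congr rfl ?_
      intro k hk
      rw [if_neg (Finset.ne_of_mem_erase hk)]
    have h0 : (0 : Fin d → ℤ) ∈ dilation {j | 1/2 < I j} (S : Set (Fin d → ℤ)) := by
      refine ⟨-i, ?_, i, hiS, ?_⟩
      · have hIi : I (-i) = 1/2 + δ := by simp [hI]
        simp only [Set.mem_setOf_eq, hIi]; linarith
      · simp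
    rw [← hact I hab] at h0
    rw [Set.mem_setOf_eq, hconv] at h0
    -- show w i ≥ 0, hence M = N
    have hMle : M ≤ 0 := Finset.sum_nonpos (fun k hk => le_of_lt (Finset.mem_filter.mp hk).2)
    have hwi : 0 ≤ w i := by
      by_contra hw
      push_neg at hw
      nlinarith
    have hMN : M = N := by
      rw [hM, hN]
      congr 1
      rw [Finset.filter_erase]
      exact Finset.erase_eq_of_notMem (by simp [hwi.not_gt])
    rw [hMN] at h0
    exact h0
  -- conclude
  ext i
  simp only [Finset.coe_sort_coe, Finset.mem_coe, Set.mem_setOf_eq, ← hN]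
  constructor
  · intro hi
    refine ⟨hSΩ hi, ?_⟩
    have := hB i hi
    rw [div_lt_iff₀ hhalf]
    linarith
  · rintro ⟨hiΩ, hτ⟩
    by_contra hiS
    have hw := hA2 i hiΩ hiS
    have h1 : b - N < w i * (1/2 + δ) := (div_lt_iff₀ hhalf).mp hτ
    have hwpos : 0 < w i :=
      lt_of_le_of_lt (div_nonneg (by linarith) hhalf.le) hτ
    nlinarith
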